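/- For every well-formed parsing expression grammar G there exists a one-way deterministic pointer pushdown automaton M such that M accepts a word w if and only if w ∈ L(G); that is, every parsing expression language is recognized by some one-way DPPDA. -/

import Mathlib

/-! ### Parsing expression grammars -/

/-- Parsing expressions over nonterminals `N` and input alphabet `A`:
`ε`, terminals, nonterminals, sequence, prioritized choice, not-predicate. -/
inductive PExp (N A : Type) : Type where
  | eps : PExp N A
  | term : A → PExp N A
  | nt : N → PExp N A
  | seq : PExp N A → PExp N A → PExp N A
  | choice : PExp N A → PExp N A → PExp N A
  | not : PExp N A → PExp N A

/-- A parsing expression grammar: one rule per nonterminal, and an axiom. -/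
structure PEG (N A : Type) : Type where
  rule : N → PExp N A
  start : N

/-- Big-step relational semantics of the PEG parsing function `R`:
`Parses G e w r` means `R(e, w) = r`, where `r = none` encodes the failure `F`
and `r = some s` means that `e` consumed a prefix of `w` leaving the suffix `s`.
`R(e, w)` is defined iff `∃ r, Parses G e w r`. -/
inductive Parses {N A : Type} (G : PEG N A) : PExp N A → List A → Option (List A) → Prop where
  | eps (w : List A) : Parses G .eps w (some w)
  | term_ok (a : A) (s : List A) : Parses G (.term a) (a :: s) (some s)
  | term_mismatch {a b : A} (s : List A) (h : a ≠ b) : Parses G (.term a) (b :: s) none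
  | term_nil (a : A) : Parses G (.term a) [] none
  | nt {B : N} {w : List A} {r : Option (List A)} :
      Parses G (G.rule B) w r → Parses G (.nt B) w r
  | seq_ok {e₁ e₂ : PExp N A} {w w' : List A} {r : Option (List A)} :
      Parses G e₁ w (some w') → Parses G e₂ w' r → Parses G (.seq e₁ e₂) w r
  | seq_fail {e₁ e₂ : PExp N A} {w : List A} :
      Parses G e₁ w none → Parses G (.seq e₁ e₂) w none
  | choice_fst {e₁ e₂ : PExp N A} {w w' : List A} :
      Parses G e₁ w (some w') → Parses G (.choice e₁ e₂) w (some w')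
  | choice_snd {e₁ e₂ : PExp N A} {w : List A} {r : Option (List A)} :
      Parses G e₁ w none → Parses G e₂ w r → Parses G (.choice e₁ e₂) w r
  | not_succ {e : PExp N A} {w : List A} :
      Parses G e w none → Parses G (.not e) w (some w)
  | not_fail {e : PExp N A} {w w' : List A} :
      Parses G e w (some w') → Parses G (.not e) w none

/-- The language generated by a PEG: `L(G) = {w | R(S, w) = ε}`. -/
def PEG.Lang {N A : Type} (G : PEG N A) : Set (List A) :=
  {w | Parses G (.nt G.start) w (some [])}

/-- A PEG is complete if `R(S, w)` is defined for every input `w`. -/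
def PEG.Complete {N A : Type} (G : PEG N A) : Prop :=
  ∀ w : List A, ∃ r, Parses G (.nt G.start) w r

/-- Conservative test whether an expression could succeed without consuming input. -/
def PExp.maybeEmpty {N A : Type} : PExp N A → Bool
  | .eps => true
  | .term _ => false
  | .nt _ => true
  | .seq e₁ e₂ => e₁.maybeEmpty && e₂.maybeEmpty
  | .choice e₁ e₂ => e₁.maybeEmpty || e₂.maybeEmpty
  | .not _ => true

/-- The nonterminals that an expression can invoke without first consuming input. -/
def PExp.leftNts {N A : Type} : PExp N A → Set N
  | .eps => ∅
  | .term _ => ∅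
  | .nt B => {B}
  | .seq e₁ e₂ => e₁.leftNts ∪ (if e₁.maybeEmpty then e₂.leftNts else ∅)
  | .choice e₁ e₂ => e₁.leftNts ∪ e₂.leftNts
  | .not e => e.leftNts

/-- A PEG is well-formed if it has no (directly or mutually) left-recursive rules:
no nonterminal can reach an invocation of itself without consuming input. -/
def PEG.WellFormed {N A : Type} (G : PEG N A) : Prop :=
  ∀ B : N, ¬ Relation.TransGen (fun X Y : N => Y ∈ (G.rule X).leftNts) B B

/-! ### Deterministic pointer pushdown automata -/

/-- Tape symbols: the input letters plus the end markers `▷` and `◁`. -/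
inductive TSym (A : Type) : Type where
  | lmark : TSym A
  | rmark : TSym A
  | sym : A → TSym A

/-- The symbol in cell `j` of the tape `▷w◁` (cell `0` holds `▷`, cell `|w|+1` holds `◁`). -/
def tapeNth {A : Type} (w : List A) (j : ℕ) : TSym A :=
  if j = 0 then .lmark
  else
    match w[j - 1]? with
    | some a => .sym a
    | none => .rmark

/-- Head directions: move left, stay, return to the stored pointer, move right. -/
inductive Dir : Type where
  | left | down | up | right
deriving DecidableEq

/-- A (two-way) deterministic pointer pushdown automaton.  A transition
`trans q a Z = some (p, β, d)` pops `(Z, i)` when `β = []` (moving the head by `d`,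
where `d = up` returns the head to the position `i` stored with `Z`), and pushes `β`
above `Z` when `β ≠ []` (moving the head by `d`).  Moves `↑` must pop (`α = ε`),
moving left off `▷` and right off `◁` is forbidden. -/
structure DPPDA (Q A Γ : Type) : Type where
  trans : Q → TSym A → Γ → Option (Q × List Γ × Dir)
  init : Q
  Z0 : Γ
  final : Q → Bool
  up_pop : ∀ q a Z p β, trans q a Z = some (p, β, Dir.up) → β = []
  no_left_lmark : ∀ q Z p β, trans q TSym.lmark Z ≠ some (p, β, Dir.left)
  no_right_rmark : ∀ q Z p β, trans q TSym.rmark Z ≠ some (p, β, Dir.right)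

/-- A configuration: state, stack of symbols tagged with the head position at which
they were pushed (top of the stack is the head of the list), and head position. -/
structure Conf (Q Γ : Type) : Type where
  state : Q
  stack : List (Γ × ℕ)
  pos : ℕ

/-- One move of a DPPDA on input `w` (`none` when no move is possible). -/
def DPPDA.step {Q A Γ : Type} (M : DPPDA Q A Γ) (w : List A) (c : Conf Q Γ) :
    Option (Conf Q Γ) :=
  match c.stack with
  | [] => none
  | (Z, i) :: rest =>
    match M.trans c.state (tapeNth w c.pos) Z with
    | none => none
    | some (p, β, d) =>
      let j' : ℕ :=
        match d with
        | Dir.left => c.pos - 1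
        | Dir.down => c.pos
        | Dir.up => i
        | Dir.right => c.pos + 1
      match β with
      | [] => some ⟨p, rest, j'⟩
      | X :: Xs => some ⟨p, ((X :: Xs).map fun Y => (Y, j')) ++ (Z, i) :: rest, j'⟩

/-- Reachability between configurations. -/
def DPPDA.Reaches {Q A Γ : Type} (M : DPPDA Q A Γ) (w : List A) :
    Conf Q Γ → Conf Q Γ → Prop :=
  Relation.ReflTransGen (fun c c' => M.step w c = some c')

/-- Acceptance: from the initial configuration `(q₀, (Z₀, 0), 0)` the automaton
reaches the right end marker with empty stack in a final state. -/
def DPPDA.Accepts {Q A Γ : Type} (M : DPPDA Q A Γ) (w : List A) : Prop :=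
  ∃ qf : Q, M.final qf = true ∧
    M.Reaches w ⟨M.init, [(M.Z0, 0)], 0⟩ ⟨qf, [], w.length + 1⟩

/-- A one-way DPPDA: moves with direction `←` are forbidden. -/
def DPPDA.OneWay {Q A Γ : Type} (M : DPPDA Q A Γ) : Prop :=
  ∀ q a Z p β, M.trans q a Z ≠ some (p, β, Dir.left)

/-!
The automaton is a recursive-descent parser. Evaluating a parsing expression `e` pushes a frame
recording `e` together with the head position where the evaluation starts; subexpressions are
evaluated above it, and when `e` fails the head jumps back to the recorded position (a `↑` move).
This is the only backtracking a PEG needs, so the head never moves left, and an induction over the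
derivation of `R(e, s) = r` shows that the automaton reproduces the result `r`. Only subexpressions
of the rules ever occur in frames, so the stack alphabet can be cut down to a finite one.
Conversely, well-formedness makes `R` total (induct on the length of the input, then along the
well-founded relation "calls without consuming input"), so on every input the deterministic
automaton halts in the configuration encoding `R(S, w)`, and it accepts exactly when `R(S, w) = ε`.
-/

theorem Finite.wellFounded_of_forall_not_transGen {α : Type*} [Finite α] {r : α → α → Prop}
    (h : ∀ a, ¬ Relation.TransGen r a a) : WellFounded r := by
  have : IsTrans α (Relation.TransGen r) := ⟨fun _ _ _ => .trans⟩
  have : Std.Irrefl (Relation.TransGen r) := ⟨h⟩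
  exact Subrelation.wf (fun h => Relation.TransGen.single h)
    (Finite.wellFounded_of_trans_of_irrefl _)

section Semantics

variable {N A : Type} {G : PEG N A}

namespace Parses

theorem suffix {e : PExp N A} {s : List A} {r : Option (List A)} (h : Parses G e s r) :
    ∀ s' ∈ r, s' <:+ s := by
  induction h with
  | eps | not_succ => rintro _ ⟨⟩; exact List.suffix_refl _
  | term_ok a s => rintro _ ⟨⟩; exact List.suffix_cons a s
  | term_mismatch | term_nil | seq_fail | not_fail => rintro _ ⟨⟩
  | nt _ ih | choice_fst _ ih | choice_snd _ _ _ ih => exact ih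
  | seq_ok _ _ ih₁ ih₂ => exact fun s' hs' => (ih₂ s' hs').trans (ih₁ _ rfl)

theorem maybeEmpty_of_mem_self {e : PExp N A} {s : List A} {r : Option (List A)}
    (h : Parses G e s r) (hs : s ∈ r) : e.maybeEmpty = true := by
  induction h with
  | eps | nt | not_succ => rfl
  | term_ok a s => exact absurd (Option.some_inj.1 hs) (List.cons_ne_self a s).symm
  | term_mismatch | term_nil | seq_fail | not_fail => cases hs
  | seq_ok h₁ h₂ ih₁ ih₂ =>
    cases hs
    obtain rfl := (h₁.suffix _ rfl).eq_of_length_le (h₂.suffix _ rfl).length_le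
    simp [PExp.maybeEmpty, ih₁ rfl, ih₂ rfl]
  | choice_fst _ ih | choice_snd _ _ _ ih => simp [PExp.maybeEmpty, ih hs]

end Parses

namespace PEG

theorem exists_parses_of_leftNts {s : List A} (e : PExp N A)
    (hleft : ∀ B ∈ e.leftNts, ∃ r, Parses G (.nt B) s r)
    (hshort : ∀ t : List A, t.length < s.length → ∀ e' : PExp N A, ∃ r, Parses G e' t r) :
    ∃ r, Parses G e s r := by
  induction e with
  | eps => exact ⟨_, .eps s⟩
  | term a =>
    match s with
    | [] => exact ⟨_, .term_nil a⟩
    | b :: t =>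
      by_cases h : a = b
      · exact h ▸ ⟨_, .term_ok a t⟩
      · exact ⟨_, .term_mismatch t h⟩
  | nt B => exact hleft B rfl
  | seq e₁ e₂ ih₁ ih₂ =>
    obtain ⟨_ | s₁, h₁⟩ := ih₁ fun B hB => hleft B (.inl hB)
    · exact ⟨_, .seq_fail h₁⟩
    obtain hlt | heq := (h₁.suffix _ rfl).length_le.lt_or_eq
    · exact (hshort s₁ hlt e₂).imp fun _ => h₁.seq_ok
    · obtain rfl := (h₁.suffix _ rfl).eq_of_length heq
      have hme := h₁.maybeEmpty_of_mem_self rfl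
      exact (ih₂ fun B hB => hleft B (.inr (by simpa [hme] using hB))).imp fun _ => h₁.seq_ok
  | choice e₁ e₂ ih₁ ih₂ =>
    obtain ⟨_ | s₁, h₁⟩ := ih₁ fun B hB => hleft B (.inl hB)
    · exact (ih₂ fun B hB => hleft B (.inr hB)).imp fun _ => h₁.choice_snd
    · exact ⟨_, h₁.choice_fst⟩
  | not e ih =>
    obtain ⟨_ | s', h⟩ := ih hleft
    · exact ⟨_, h.not_succ⟩
    · exact ⟨_, h.not_fail⟩

namespace WellFormed

variable [Finite N]

theorem wellFounded_leftNts (hG : G.WellFormed) :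
    WellFounded fun B' B : N => B' ∈ (G.rule B).leftNts :=
  Finite.wellFounded_of_forall_not_transGen fun B h => hG B (Relation.transGen_swap.2 h)

theorem exists_parses (hG : G.WellFormed) (s : List A) (e : PExp N A) : ∃ r, Parses G e s r := by
  induction hn : s.length using Nat.strong_induction_on generalizing s e with
  | _ n ih =>
  have hshort : ∀ t : List A, t.length < s.length → ∀ e', ∃ r, Parses G e' t r :=
    fun t ht e' => ih _ (hn ▸ ht) t e' rfl
  have hnt (B : N) : ∃ r, Parses G (.nt B) s r :=
    hG.wellFounded_leftNts.induction B fun B ihB =>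
      (exists_parses_of_leftNts _ ihB hshort).imp fun _ => .nt
  exact exists_parses_of_leftNts e (fun B _ => hnt B) hshort

theorem complete (hG : G.WellFormed) : G.Complete :=
  fun w => hG.exists_parses w _

end WellFormed

end PEG

end Semantics

def Dir.move : Dir → ℕ → ℕ → ℕ
  | .left, j, _ => j - 1
  | .down, j, _ => j
  | .up, _, i => i
  | .right, j, _ => j + 1

def Conf.map {Q Γ Γ' : Type} (f : Γ → Γ') (c : Conf Q Γ) : Conf Q Γ' :=
  ⟨c.state, c.stack.map (Prod.map f id), c.pos⟩

namespace DPPDA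

variable {Q A Γ : Type} {M : DPPDA Q A Γ} {w : List A}

section Steps

variable {q p : Q} {Z : Γ} {i j : ℕ} {σ : List (Γ × ℕ)}

theorem step_of_trans_none (h : M.trans q (tapeNth w j) Z = none) :
    M.step w ⟨q, (Z, i) :: σ, j⟩ = none := by
  simp [step, h]

theorem Reaches.trans {a b c : Conf Q Γ} (hab : M.Reaches w a b) (hbc : M.Reaches w b c) :
    M.Reaches w a c :=
  Relation.ReflTransGen.trans hab hbc

variable (M)

theorem reaches_pop (d : Dir) (h : M.trans q (tapeNth w j) Z = some (p, [], d)) :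
    M.Reaches w ⟨q, (Z, i) :: σ, j⟩ ⟨p, σ, d.move j i⟩ :=
  .single (by cases d <;> simp [step, h, Dir.move])

theorem reaches_push (d : Dir) {X : Γ} {Xs : List Γ}
    (h : M.trans q (tapeNth w j) Z = some (p, X :: Xs, d)) :
    M.Reaches w ⟨q, (Z, i) :: σ, j⟩
      ⟨p, (X :: Xs).map (·, d.move j i) ++ (Z, i) :: σ, d.move j i⟩ :=
  .single (by cases d <;> simp [step, h, Dir.move])

end Steps

theorem eq_of_reaches_of_step_eq_none {c a b : Conf Q Γ} (ha : M.Reaches w c a)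
    (hb : M.Reaches w c b) (ha' : M.step w a = none) (hb' : M.step w b = none) : a = b :=
  Part.mem_unique (StateTransition.mem_eval.2 ⟨ha, ha'⟩)
    (StateTransition.mem_eval.2 ⟨hb, hb'⟩)

section Restrict

variable (M) (S : Set Γ)
  (hS : ∀ q a Z p β d, Z ∈ S → M.trans q a Z = some (p, β, d) → ∀ X ∈ β, X ∈ S)
  (h0 : M.Z0 ∈ S)

def restrictTrans (q : Q) (a : TSym A) (Z : S) : Option (Q × List S × Dir) :=
  (M.trans q a Z).pmap (fun x hx => (x.1, x.2.1.pmap Subtype.mk hx, x.2.2))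
    fun _ hx => hS _ _ _ _ _ _ Z.2 hx

theorem map_restrictTrans (q : Q) (a : TSym A) (Z : S) :
    (restrictTrans M S hS q a Z).map (fun x => (x.1, x.2.1.map Subtype.val, x.2.2)) =
      M.trans q a Z := by
  simp only [restrictTrans, Option.map_pmap, List.map_pmap, List.pmap_eq_map, Option.pmap_eq_map,
    List.map_id']
  exact congrFun Option.map_id_fun' _

variable {M S hS} in
theorem trans_of_restrictTrans {q p : Q} {a : TSym A} {Z : S} {β : List S} {d : Dir}
    (h : restrictTrans M S hS q a Z = some (p, β, d)) :
    M.trans q a Z = some (p, β.map Subtype.val, d) := by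
  rw [← map_restrictTrans M S hS, h]; rfl

def restrict : DPPDA Q A S where
  trans := restrictTrans M S hS
  init := M.init
  Z0 := ⟨M.Z0, h0⟩
  final := M.final
  up_pop _ _ _ _ _ h := List.map_eq_nil_iff.1 (M.up_pop _ _ _ _ _ (trans_of_restrictTrans h))
  no_left_lmark _ _ _ _ h := M.no_left_lmark _ _ _ _ (trans_of_restrictTrans h)
  no_right_rmark _ _ _ _ h := M.no_right_rmark _ _ _ _ (trans_of_restrictTrans h)

theorem step_map_val (c : Conf Q S) :
    M.step w (c.map Subtype.val) = ((M.restrict S hS h0).step w c).map (Conf.map Subtype.val) := by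
  obtain ⟨q, _ | ⟨⟨Z, i⟩, σ⟩, j⟩ := c
  · rfl
  simp only [Conf.map, List.map_cons, Prod.map_apply, id_eq, step]
  rw [← map_restrictTrans M S hS]
  dsimp only [restrict]
  rcases restrictTrans M S hS q (tapeNth w j) Z with _ | ⟨p, _ | ⟨X, Xs⟩, d⟩
  · rfl
  · rfl
  · simp [Conf.map, Function.comp_def]

theorem reaches_map_val {c c' : Conf Q S} (h : (M.restrict S hS h0).Reaches w c c') :
    M.Reaches w (c.map Subtype.val) (c'.map Subtype.val) :=
  Relation.ReflTransGen.lift (Conf.map Subtype.val)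
    (fun _ _ hab => by simp only [Function.onFun, step_map_val M S hS h0, hab]; rfl) _ _ h

theorem exists_reaches_of_reaches_map_val {c : Conf Q S} {c' : Conf Q Γ}
    (h : M.Reaches w (c.map Subtype.val) c') :
    ∃ c'', (M.restrict S hS h0).Reaches w c c'' ∧ c''.map Subtype.val = c' := by
  induction h with
  | refl => exact ⟨c, .refl, rfl⟩
  | tail _ hstep ih =>
    obtain ⟨c₁, hc₁, rfl⟩ := ih
    rw [step_map_val M S hS h0] at hstep
    obtain ⟨c₂, hc₂, rfl⟩ := Option.map_eq_some_iff.1 hstep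
    exact ⟨c₂, hc₁.tail hc₂, rfl⟩

theorem accepts_restrict : (M.restrict S hS h0).Accepts w ↔ M.Accepts w := by
  refine ⟨fun ⟨qf, hf, h⟩ => ⟨qf, hf, reaches_map_val M S hS h0 h⟩,
    fun ⟨_, hf, h⟩ => ?_⟩
  obtain ⟨⟨q, σ, j⟩, hc, hc'⟩ := exists_reaches_of_reaches_map_val M S hS h0
    (c := ⟨M.init, [(⟨M.Z0, h0⟩, 0)], 0⟩) h
  simp only [Conf.map, Conf.mk.injEq, List.map_eq_nil_iff] at hc'
  obtain ⟨rfl, rfl, rfl⟩ := hc'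
  exact ⟨q, hf, hc⟩

variable {M S hS h0} in
theorem OneWay.restrict (h : M.OneWay) : (M.restrict S hS h0).OneWay :=
  fun _ _ _ _ _ h' => h _ _ _ _ _ (trans_of_restrictTrans (hS := hS) h')

end Restrict

end DPPDA

section Construction

variable {N A : Type}

def PExp.subexprs : PExp N A → Set (PExp N A)
  | .eps => {.eps}
  | .term a => {.term a}
  | .nt B => {.nt B}
  | .seq e₁ e₂ => insert (.seq e₁ e₂) (e₁.subexprs ∪ e₂.subexprs)
  | .choice e₁ e₂ => insert (.choice e₁ e₂) (e₁.subexprs ∪ e₂.subexprs)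
  | .not e => insert (.not e) e.subexprs

namespace PExp

theorem mem_subexprs_self (e : PExp N A) : e ∈ e.subexprs := by
  cases e <;> simp [subexprs]

theorem subexprs_subset {e f : PExp N A} (h : f ∈ e.subexprs) : f.subexprs ⊆ e.subexprs := by
  induction e with
  | eps | term | nt => simp only [subexprs, Set.mem_singleton_iff] at h; exact h ▸ le_rfl
  | seq e₁ e₂ ih₁ ih₂ | choice e₁ e₂ ih₁ ih₂ =>
    simp only [subexprs, Set.mem_insert_iff, Set.mem_union] at h
    rcases h with rfl | h | h
    · exact le_rfl
    · exact (ih₁ h).trans (Set.subset_union_left.trans (Set.subset_insert _ _))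
    · exact (ih₂ h).trans (Set.subset_union_right.trans (Set.subset_insert _ _))
  | not e ih =>
    simp only [subexprs, Set.mem_insert_iff] at h
    rcases h with rfl | h
    · exact le_rfl
    · exact (ih h).trans (Set.subset_insert _ _)

theorem finite_subexprs (e : PExp N A) : e.subexprs.Finite := by
  induction e <;> simp [subexprs, *]

end PExp

namespace PEG

def exprs (G : PEG N A) : Set (PExp N A) :=
  insert (.nt G.start) (⋃ B, (G.rule B).subexprs)

theorem finite_exprs [Finite N] (G : PEG N A) : G.exprs.Finite :=
  (Set.finite_iUnion fun B => (G.rule B).finite_subexprs).insert _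

theorem rule_mem_exprs (G : PEG N A) (B : N) : G.rule B ∈ G.exprs :=
  Set.mem_insert_of_mem _ (Set.mem_iUnion.2 ⟨B, PExp.mem_subexprs_self _⟩)

theorem mem_exprs_of_mem_subexprs {G : PEG N A} {e f : PExp N A} (he : e ∈ G.exprs)
    (hf : f ∈ e.subexprs) : f ∈ G.exprs := by
  simp only [exprs, Set.mem_insert_iff, Set.mem_iUnion] at he
  rcases he with rfl | ⟨B, he⟩
  · simp only [PExp.subexprs, Set.mem_singleton_iff] at hf
    exact hf ▸ Set.mem_insert _ _
  · exact Set.mem_insert_of_mem _ (Set.mem_iUnion.2 ⟨B, PExp.subexprs_subset he hf⟩)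

inductive State : Type
  | start | run | ok | fail | okSeq | failChoice | accept
deriving DecidableEq

instance : Fintype State :=
  ⟨{.start, .run, .ok, .fail, .okSeq, .failChoice, .accept}, fun q => by cases q <;> simp⟩

/-- `eval e` is pushed at the head position where the evaluation of `e` starts, so that a `↑` move
returns there when `e` fails; `seqFst` and `choiceFst`, pushed just above `eval e` for a sequence
or a choice `e`, record that its first operand is being evaluated. -/
inductive Frame (N A : Type) : Type
  | bottom
  | eval (e : PExp N A)
  | seqFst
  | choiceFst

open Classical in
noncomputable def trans (G : PEG N A) :
    State → TSym A → Frame N A → Option (State × List (Frame N A) × Dir)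
  | .start, t, .bottom => if t = .lmark then some (.run, [.eval (.nt G.start)], .right) else none
  | .run, _, .eval .eps => some (.ok, [], .down)
  | .run, t, .eval (.term a) =>
    if t = .sym a then some (.ok, [], .right) else some (.fail, [], .down)
  | .run, _, .eval (.nt B) => some (.run, [.eval (G.rule B)], .down)
  | .run, _, .eval (.seq e₁ _) => some (.run, [.eval e₁, .seqFst], .down)
  | .run, _, .eval (.choice e₁ _) => some (.run, [.eval e₁, .choiceFst], .down)
  | .run, _, .eval (.not e) => some (.run, [.eval e], .down)
  | .ok, _, .seqFst => some (.okSeq, [], .down)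
  | .fail, _, .seqFst => some (.fail, [], .down)
  | .okSeq, _, .eval (.seq _ e₂) => some (.run, [.eval e₂], .down)
  | .ok, _, .choiceFst => some (.ok, [], .down)
  | .fail, _, .choiceFst => some (.failChoice, [], .down)
  | .failChoice, _, .eval (.choice _ e₂) => some (.run, [.eval e₂], .down)
  | .ok, _, .eval (.not _) => some (.fail, [], .up)
  | .fail, _, .eval (.not _) => some (.ok, [], .down)
  | .ok, _, .eval _ => some (.ok, [], .down)
  | .fail, _, .eval _ => some (.fail, [], .up)
  | .ok, t, .bottom => if t = .rmark then some (.accept, [], .down) else none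
  | _, _, _ => none

variable {G : PEG N A}

theorem trans_eq_some_dir {q p : State} {t : TSym A} {f : Frame N A} {β : List (Frame N A)}
    {d : Dir} (h : G.trans q t f = some (p, β, d)) :
    d ≠ .left ∧ (d = .up → β = []) ∧ (t = .rmark → d ≠ .right) := by
  unfold trans at h
  split at h <;> (try split_ifs at h) <;> cases h <;> simp_all

def frames (G : PEG N A) : Set (Frame N A) :=
  {.bottom, .seqFst, .choiceFst} ∪ .eval '' G.exprs

theorem finite_frames [Finite N] (G : PEG N A) : G.frames.Finite :=
  (Set.toFinite _).union (G.finite_exprs.image _)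

theorem mem_frames_of_trans_eq_some {q p : State} {t : TSym A} {f : Frame N A}
    {β : List (Frame N A)} {d : Dir} (hf : f ∈ G.frames) (h : G.trans q t f = some (p, β, d)) :
    ∀ X ∈ β, X ∈ G.frames := by
  unfold trans at h
  split at h <;> (try split_ifs at h) <;> cases h <;> simp [frames] at hf ⊢
  all_goals first
    | exact Set.mem_insert _ _
    | exact G.rule_mem_exprs _
    | exact mem_exprs_of_mem_subexprs hf (by simp [PExp.subexprs, PExp.mem_subexprs_self])

noncomputable def automaton (G : PEG N A) : DPPDA State A (Frame N A) where
  trans := G.trans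
  init := .start
  Z0 := .bottom
  final q := q = .accept
  up_pop _ _ _ _ _ h := (trans_eq_some_dir h).2.1 rfl
  no_left_lmark _ _ _ _ h := (trans_eq_some_dir h).1 rfl
  no_right_rmark _ _ _ _ h := (trans_eq_some_dir h).2.2 rfl rfl

theorem oneWay_automaton (G : PEG N A) : G.automaton.OneWay :=
  fun _ _ _ _ _ h => (trans_eq_some_dir h).1 rfl

variable (G) in
theorem trans_start_lmark :
    G.trans .start .lmark .bottom = some (.run, [.eval (.nt G.start)], .right) :=
  if_pos rfl

variable (G) in
theorem trans_run_term_self (a : A) :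
    G.trans .run (.sym a) (.eval (.term a)) = some (.ok, [], .right) :=
  if_pos rfl

variable (G) in
theorem trans_run_term_of_ne {t : TSym A} {a : A} (h : t ≠ .sym a) :
    G.trans .run t (.eval (.term a)) = some (.fail, [], .down) :=
  if_neg h

variable (G) in
theorem trans_ok_rmark : G.trans .ok .rmark .bottom = some (.accept, [], .down) :=
  if_pos rfl

variable (G) in
theorem trans_ok_sym (a : A) : G.trans .ok (.sym a) .bottom = none :=
  if_neg nofun

/-- The tape cell holding the first letter of the suffix `s` of the input `w`
(the cell of `◁` if `s = []`). -/
def posOf (w s : List A) : ℕ := w.length + 1 - s.length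

theorem posOf_cons_add_one {w s : List A} {a : A} (h : a :: s <:+ w) :
    posOf w (a :: s) + 1 = posOf w s := by
  have := h.length_le
  simp only [posOf, List.length_cons] at *
  omega

theorem tapeNth_posOf_cons {w s : List A} {a : A} (h : a :: s <:+ w) :
    tapeNth w (posOf w (a :: s)) = .sym a := by
  obtain ⟨u, rfl⟩ := h
  have hpos : posOf (u ++ a :: s) (a :: s) = u.length + 1 := by simp [posOf]; omega
  simp [hpos, tapeNth]

theorem tapeNth_posOf_nil (w : List A) : tapeNth w (posOf w []) = .rmark := by
  simp [posOf, tapeNth]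

/-- Where the automaton is left after evaluating an expression on the suffix `s` with result `r`:
after the consumed prefix on success, back at the start of `s` on failure. -/
def resultConf (w s : List A) :
    Option (List A) → List (Frame N A × ℕ) → Conf State (Frame N A)
  | some s', σ => ⟨.ok, σ, posOf w s'⟩
  | none, σ => ⟨.fail, σ, posOf w s⟩

variable {w : List A}

theorem reaches_resultConf_pop {e : PExp N A}
    (hok : ∀ t, G.trans .ok t (.eval e) = some (.ok, [], .down))
    (hfail : ∀ t, G.trans .fail t (.eval e) = some (.fail, [], .up))
    (s₁ s : List A) (r : Option (List A)) (σ : List (Frame N A × ℕ)) :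
    G.automaton.Reaches w (resultConf w s₁ r ((.eval e, posOf w s) :: σ))
      (resultConf w s r σ) := by
  cases r
  · exact G.automaton.reaches_pop .up (hfail _)
  · exact G.automaton.reaches_pop .down (hok _)

theorem reaches_resultConf {e : PExp N A} {s : List A} {r : Option (List A)}
    (hp : Parses G e s r) (hs : s <:+ w) (σ : List (Frame N A × ℕ)) :
    G.automaton.Reaches w ⟨.run, (.eval e, posOf w s) :: σ, posOf w s⟩
      (resultConf w s r σ) := by
  induction hp generalizing σ with
  | eps => exact G.automaton.reaches_pop .down rfl
  | term_ok a s =>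
    rw [resultConf, ← posOf_cons_add_one hs]
    refine G.automaton.reaches_pop .right ?_
    rw [tapeNth_posOf_cons hs]
    exact G.trans_run_term_self a
  | term_mismatch s hne =>
    refine G.automaton.reaches_pop .down ?_
    rw [tapeNth_posOf_cons hs]
    exact G.trans_run_term_of_ne fun h => hne (TSym.sym.inj h).symm
  | term_nil a =>
    refine G.automaton.reaches_pop .down ?_
    rw [tapeNth_posOf_nil]
    exact G.trans_run_term_of_ne nofun
  | nt _ ih =>
    exact (G.automaton.reaches_push .down rfl).trans <| (ih hs _).trans <|
      reaches_resultConf_pop (fun _ => rfl) (fun _ => rfl) _ _ _ _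
  | seq_ok h₁ _ ih₁ ih₂ =>
    have hs₁ := (h₁.suffix _ rfl).trans hs
    exact (G.automaton.reaches_push .down rfl).trans <| (ih₁ hs _).trans <|
      (G.automaton.reaches_pop .down rfl).trans <| (G.automaton.reaches_push .down rfl).trans <|
      (ih₂ hs₁ _).trans <| reaches_resultConf_pop (fun _ => rfl) (fun _ => rfl) _ _ _ _
  | seq_fail _ ih =>
    exact (G.automaton.reaches_push .down rfl).trans <| (ih hs _).trans <|
      (G.automaton.reaches_pop .down rfl).trans (G.automaton.reaches_pop .up rfl)
  | choice_fst _ ih =>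
    exact (G.automaton.reaches_push .down rfl).trans <| (ih hs _).trans <|
      (G.automaton.reaches_pop .down rfl).trans (G.automaton.reaches_pop .down rfl)
  | choice_snd _ _ ih₁ ih₂ =>
    exact (G.automaton.reaches_push .down rfl).trans <| (ih₁ hs _).trans <|
      (G.automaton.reaches_pop .down rfl).trans <| (G.automaton.reaches_push .down rfl).trans <|
      (ih₂ hs _).trans <| reaches_resultConf_pop (fun _ => rfl) (fun _ => rfl) _ _ _ _
  | not_succ _ ih =>
    exact (G.automaton.reaches_push .down rfl).trans <| (ih hs _).trans <|
      G.automaton.reaches_pop .down rfl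
  | not_fail _ ih =>
    exact (G.automaton.reaches_push .down rfl).trans <| (ih hs _).trans <|
      G.automaton.reaches_pop .up rfl

theorem reaches_run_start (w : List A) :
    G.automaton.Reaches w ⟨.start, [(.bottom, 0)], 0⟩
      ⟨.run, [(.eval (.nt G.start), posOf w w), (.bottom, 0)], posOf w w⟩ := by
  have hpos : posOf w w = 1 := by simp [posOf]
  have h : G.automaton.trans .start (tapeNth w 0) .bottom =
      some (.run, [.eval (.nt G.start)], .right) := G.trans_start_lmark
  rw [hpos]
  exact G.automaton.reaches_push .right h

theorem accepts_automaton_iff [Finite N] (hG : G.WellFormed) (w : List A) :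
    G.automaton.Accepts w ↔ w ∈ G.Lang := by
  have hrun {r : Option (List A)} (hr : Parses G (.nt G.start) w r) :
      G.automaton.Reaches w ⟨.start, [(.bottom, 0)], 0⟩ (resultConf w w r [(.bottom, 0)]) :=
    (reaches_run_start w).trans (reaches_resultConf hr (List.suffix_refl w) _)
  refine ⟨fun ⟨_, _, hacc⟩ => ?_, fun hw => ⟨.accept, rfl, (hrun hw).trans
    (G.automaton.reaches_pop .down (by rw [tapeNth_posOf_nil]; exact G.trans_ok_rmark))⟩⟩
  obtain ⟨r, hr⟩ := hG.complete w
  -- by determinism, a halt in `resultConf` would be the accepting halt, whose stack is empty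
  have not_halts (hstuck : G.automaton.step w (resultConf w w r [(.bottom, 0)]) = none) :
      False := by
    have := DPPDA.eq_of_reaches_of_step_eq_none (hrun hr) hacc hstuck rfl
    cases r <;> simp [resultConf] at this
  rcases r with _ | _ | ⟨a, s⟩
  · exact (not_halts rfl).elim
  · exact hr
  · refine (not_halts (DPPDA.step_of_trans_none ?_)).elim
    rw [tapeNth_posOf_cons (hr.suffix _ rfl)]
    exact G.trans_ok_sym a

end PEG

end Construction

theorem peg_to_dppda_general {N A : Type} [Finite N] (G : PEG N A)
    (hG : G.WellFormed) :
    ∃ (Q Γ : Type) (_ : Finite Q) (_ : Finite Γ) (M : DPPDA Q A Γ),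
      M.OneWay ∧ ∀ w : List A, M.Accepts w ↔ w ∈ G.Lang :=
  ⟨PEG.State, G.frames, inferInstance, G.finite_frames.to_subtype,
    G.automaton.restrict G.frames (fun _ _ _ _ _ _ => PEG.mem_frames_of_trans_eq_some)
      (Or.inl (Set.mem_insert _ _)),
    G.oneWay_automaton.restrict,
    fun w => (DPPDA.accepts_restrict _ _ _ _).trans (PEG.accepts_automaton_iff hG w)⟩

/-- For every well-formed PEG `G` there is a one-way deterministic
pointer pushdown automaton accepting exactly the words of `L(G)`. -/
theorem peg_to_dppda {N A : Type} [Finite N] [Finite A] (G : PEG N A)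
    (hG : G.WellFormed) :
    ∃ (Q Γ : Type) (_ : Finite Q) (_ : Finite Γ) (M : DPPDA Q A Γ),
      M.OneWay ∧ ∀ w : List A, M.Accepts w ↔ w ∈ G.Lang :=
  peg_to_dppda_general G hG
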